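/- Let r > 0, T > 0 and n ∈ ℕ*. If f ∈ L²(ℝ₊, μ_r; ℝⁿ) is orthogonal to the subspace P̄_T²(ℝ₊, μ_r; ℝⁿ) in L²(ℝ₊, μ_r; ℝⁿ) and f(t) ≥ 0 (componentwise) for almost every t ∈ ℝ₊, then f = 0 almost everywhere on ℝ₊. -/

import Mathlib

/-! Testing `f` against the constant (hence periodic) functions `eᵢ`, which lie in `L²(μ_r)`
because `μ_r` is finite, shows that every component of `f` has zero `μ_r`-integral. A
nonnegative function with zero integral vanishes `μ_r`-a.e., and `μ_r` has the same null sets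
as Lebesgue measure on `ℝ₊` since its density is positive. -/

open MeasureTheory Real Set RealInnerProductSpace

/-- The weighted measure `μ_r` on `ℝ₊`. -/
noncomputable def muW (r : ℝ) : Measure ℝ :=
  (volume.withDensity fun t => ENNReal.ofReal (Real.exp (-r * t))).restrict (Set.Ici 0)

theorem ae_eq_zero_of_integral_apply_eq_zero {α ι : Type*} [MeasurableSpace α] [Fintype ι]
    {μ : Measure α} {f : α → EuclideanSpace ℝ ι} (hf : Integrable f μ)
    (hpos : ∀ᵐ t ∂μ, ∀ i, 0 ≤ f t i) (hzero : ∀ i, ∫ t, f t i ∂μ = 0) : f =ᵐ[μ] 0 := by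
  have hcomp : ∀ i, (fun t => f t i) =ᵐ[μ] 0 := fun i =>
    (integral_eq_zero_iff_of_nonneg_ae (hpos.mono fun t ht => ht i)
      (ContinuousLinearMap.integrable_comp (EuclideanSpace.proj (𝕜 := ℝ) i :
        EuclideanSpace ℝ ι →L[ℝ] ℝ) hf)).mp (hzero i)
  filter_upwards [ae_all_iff.mpr hcomp] with t ht
  ext i
  exact ht i

section muW

variable (r : ℝ)

theorem muW_eq_withDensity :
    muW r = (volume.restrict (Ici 0)).withDensity fun t => ENNReal.ofReal (exp (-r * t)) :=
  restrict_withDensity measurableSet_Ici _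

theorem muW_absolutelyContinuous : muW r ≪ volume.restrict (Ici 0) := by
  rw [muW_eq_withDensity]
  exact withDensity_absolutelyContinuous _ _

theorem absolutelyContinuous_muW : volume.restrict (Ici 0) ≪ muW r := by
  rw [muW_eq_withDensity]
  refine withDensity_absolutelyContinuous' (by fun_prop) (.of_forall fun t => ?_)
  exact (ENNReal.ofReal_pos.mpr (exp_pos _)).ne'

end muW

theorem isFiniteMeasure_muW {r : ℝ} (hr : 0 < r) : IsFiniteMeasure (muW r) := by
  have hint : IntegrableOn (fun t => exp (-r * t)) (Ici 0) :=
    (exp_neg_integrableOn_Ioi 0 hr).congr_set_ae Ioi_ae_eq_Ici.symm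
  rw [muW_eq_withDensity]
  exact isFiniteMeasure_withDensity_ofReal hint.2

theorem orthogonal_nonneg_eq_zero_general
    (r T : ℝ) (hr : 0 < r) (n : ℕ)
    (f : ℝ → EuclideanSpace ℝ (Fin n)) (hf : MemLp f 2 (muW r))
    (horth : ∀ q : ℝ → EuclideanSpace ℝ (Fin n), MemLp q 2 (muW r) →
      (∀ᵐ t ∂(volume.restrict (Set.Ici (0:ℝ))), q (t + T) = q t) →
      ∫ t, ⟪f t, q t⟫ ∂(muW r) = 0)
    (hpos : ∀ᵐ t ∂(volume.restrict (Set.Ici (0:ℝ))), ∀ i : Fin n, 0 ≤ f t i) :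
    ∀ᵐ t ∂(volume.restrict (Set.Ici (0:ℝ))), f t = 0 := by
  have := isFiniteMeasure_muW hr
  have hzero : ∀ i, ∫ t, f t i ∂(muW r) = 0 := fun i => by
    simpa [EuclideanSpace.inner_single_right] using
      horth _ (memLp_const (EuclideanSpace.single i (1 : ℝ))) (.of_forall fun _ => rfl)
  exact absolutelyContinuous_muW r <| ae_eq_zero_of_integral_apply_eq_zero
    (hf.integrable one_le_two) (muW_absolutelyContinuous r |>.ae_le hpos) hzero

/-- If `f ∈ L²(ℝ₊,μ_r;ℝⁿ)` is orthogonal to the `L²`-closure of the continuous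
`T`-periodic functions and `f ≥ 0` (componentwise) a.e. on `ℝ₊`, then `f = 0` a.e. -/
theorem orthogonal_nonneg_eq_zero
    (r T : ℝ) (hr : 0 < r) (hT : 0 < T) (n : ℕ) (hn : 0 < n)
    (f : ℝ → EuclideanSpace ℝ (Fin n)) (hf : MemLp f 2 (muW r))
    (horth : ∀ q : ℝ → EuclideanSpace ℝ (Fin n), MemLp q 2 (muW r) →
      (∀ᵐ t ∂(volume.restrict (Set.Ici (0:ℝ))), q (t + T) = q t) →
      ∫ t, ⟪f t, q t⟫ ∂(muW r) = 0)
    (hpos : ∀ᵐ t ∂(volume.restrict (Set.Ici (0:ℝ))), ∀ i : Fin n, 0 ≤ f t i) :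
    ∀ᵐ t ∂(volume.restrict (Set.Ici (0:ℝ))), f t = 0 :=
  orthogonal_nonneg_eq_zero_general r T hr n f hf horth hpos
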